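/- arXiv:1108.3625 — 2 statements merged into one kernel-verified Lean document; each statement's English description precedes it below -/
import Mathlib

section
/- Every bounded semilinear language is recognized by a Parikh automaton. That is, if L ⊆ Σ* has a socle w₁, …, wₙ such that the iteration set Iter_{(w₁,…,wₙ)}(L) is semilinear, then there exists a Parikh automaton (A, C) with L(A, C) = L. -/
open scoped Classical

noncomputable section

/-! ### Basic word and language notions -/

/-- Number of occurrences of `b` in the list `l`. -/
def countOcc {β : Type} (l : List β) (b : β) : ℕ :=
  (l.filter fun s => decide (s = b)).length

/-- `wpow w k` is the word `w` concatenated with itself `k` times. -/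
def wpow {β : Type} (w : List β) : ℕ → List β
  | 0 => []
  | k + 1 => w ++ wpow w k

/-- The word `w₁^{k₁} ⋯ wₙ^{kₙ}`. -/
def socProd {β : Type} {n : ℕ} (w : Fin n → List β) (k : Fin n → ℕ) : List β :=
  (List.ofFn fun i => wpow (w i) (k i)).flatten

/-- `w₁, …, wₙ` is a socle of `L`: the `wᵢ` are nonempty and `L ⊆ w₁* ⋯ wₙ*`. -/
def IsSocle {β : Type} {n : ℕ} (L : Set (List β)) (w : Fin n → List β) : Prop :=
  (∀ i, w i ≠ []) ∧ ∀ x ∈ L, ∃ k : Fin n → ℕ, x = socProd w k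

/-- A language is bounded if it has a socle. -/
def BoundedLang {β : Type} (L : Set (List β)) : Prop :=
  ∃ (n : ℕ) (w : Fin n → List β), 0 < n ∧ IsSocle L w

/-- The iteration set of `L` w.r.t. the socle `w`. -/
def IterSet {β : Type} {n : ℕ} (L : Set (List β)) (w : Fin n → List β) :
    Set (Fin n → ℕ) :=
  {k | socProd w k ∈ L}

/-- Concatenation of two languages. -/
def catLang {β : Type} (X Y : Set (List β)) : Set (List β) :=
  {w | ∃ x ∈ X, ∃ y ∈ Y, w = x ++ y}

/-- The language `z* = {z^k | k ∈ ℕ}` of powers of a single word. -/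
def starWord {β : Type} (z : List β) : Set (List β) :=
  {w | ∃ k : ℕ, w = wpow z k}

/-- Kleene star of a language. -/
def starLang {β : Type} (K : Set (List β)) : Set (List β) :=
  {w | ∃ l : List (List β), (∀ u ∈ l, u ∈ K) ∧ w = l.flatten}

/-! ### Semilinear sets -/

/-- `C ⊆ ℕ^ι` is linear: `C = c + P*` for a finite `P`. -/
def IsLinearSetN {ι : Type} (C : Set (ι → ℕ)) : Prop :=
  ∃ (c : ι → ℕ) (P : Set (ι → ℕ)), P.Finite ∧
    C = {x | ∃ p ∈ AddSubmonoid.closure P, x = c + p}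

/-- `C ⊆ ℕ^ι` is semilinear: a finite union of linear sets. -/
def IsSemilinearSetN {ι : Type} (C : Set (ι → ℕ)) : Prop :=
  ∃ S : Set (Set (ι → ℕ)), S.Finite ∧ (∀ D ∈ S, IsLinearSetN D) ∧ C = ⋃₀ S

/-- `L` is a bounded semilinear language: it has a socle whose iteration set is
semilinear. -/
def InBSL {β : Type} (L : Set (List β)) : Prop :=
  ∃ (n : ℕ) (w : Fin n → List β), 0 < n ∧ IsSocle L w ∧ IsSemilinearSetN (IterSet L w)

/-! ### Finite automata, paths, runs -/

/-- A (nondeterministic) finite automaton with a single initial state, a set of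
final states and a finite set of transitions. -/
structure FinAut (α : Type) where
  σ : Type
  [finσ : Fintype σ]
  init : σ
  accept : Set σ
  δ : Set (σ × α × σ)
  finδ : δ.Finite

namespace FinAut

variable {α : Type}

/-- The type of transitions of `A`. -/
def Trans (A : FinAut α) : Type := {t : A.σ × α × A.σ // t ∈ A.δ}

def src {A : FinAut α} (t : A.Trans) : A.σ := t.1.1
def lbl {A : FinAut α} (t : A.Trans) : α := t.1.2.1
def tgt {A : FinAut α} (t : A.Trans) : A.σ := t.1.2.2

/-- `A.Steps q π r` holds when `π` is a path from state `q` to state `r`. -/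
inductive Steps (A : FinAut α) : A.σ → List A.Trans → A.σ → Prop
  | nil (q : A.σ) : Steps A q [] q
  | cons {q r : A.σ} {t : A.Trans} {π : List A.Trans} :
      src t = q → Steps A (tgt t) π r → Steps A q (t :: π) r

/-- The set of accepting paths of `A`, as a language over the transition set. -/
def Run (A : FinAut α) : Set (List A.Trans) :=
  {π | ∃ f ∈ A.accept, A.Steps A.init π f}

/-- The language of `A`: labels of accepting paths. -/
def lang (A : FinAut α) : Set (List α) :=
  {w | ∃ π ∈ A.Run, w = π.map lbl}

/-- `A` is deterministic. -/
def Deterministic (A : FinAut α) : Prop :=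
  ∀ ⦃p : A.σ⦄ ⦃a : α⦄ ⦃q q' : A.σ⦄, (p, a, q) ∈ A.δ → (p, a, q') ∈ A.δ → q = q'

/-- The Parikh image of a path: how many times each transition occurs. -/
def pathCount {A : FinAut α} (π : List A.Trans) : A.Trans → ℕ :=
  fun t => countOcc π t

/-- `A` is flat: it consists of a spine of states `q 0, …, q n` (`q 0` initial,
`q n` final, exactly one transition from `q i` to `q (i+1)` given by the label
`sl i`), together with, for at most one pair `lo k ≤ hi k` each, a back-path of
fresh states from `q (hi k)` to `q (lo k)`; the endpoints of distinct
back-paths are not strictly inside one another (no nested loops). -/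
def Flat (A : FinAut α) : Prop :=
  ∃ (n : ℕ) (q : Fin (n + 1) → A.σ) (sl : Fin n → α) (m : ℕ)
    (lo hi : Fin m → Fin (n + 1)) (fresh : Fin m → List A.σ) (bl : Fin m → List α),
    Function.Injective q ∧
    A.init = q 0 ∧
    A.accept = {q (Fin.last n)} ∧
    (∀ k, lo k ≤ hi k) ∧
    (∀ k k', k ≠ k' → (lo k, hi k) ≠ (lo k', hi k')) ∧
    (∀ k k', k ≠ k' →
      ¬(lo k < lo k' ∧ lo k' < hi k) ∧ ¬(lo k < hi k' ∧ hi k' < hi k)) ∧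
    (∀ k, (fresh k).Nodup) ∧
    (∀ k i, q i ∉ fresh k) ∧
    (∀ k k', k ≠ k' → ∀ s ∈ fresh k, s ∉ fresh k') ∧
    (∀ s : A.σ, (∃ i, s = q i) ∨ ∃ k, s ∈ fresh k) ∧
    (∀ k, (bl k).length = (fresh k).length + 1) ∧
    A.δ = {t | (∃ i : Fin n, t = (q i.castSucc, sl i, q i.succ)) ∨
        (∃ (k : Fin m) (j : ℕ) (s s' : A.σ) (a : α),
          (q (hi k) :: (fresh k ++ [q (lo k)]))[j]? = some s ∧
          (bl k)[j]? = some a ∧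
          (q (hi k) :: (fresh k ++ [q (lo k)]))[j + 1]? = some s' ∧
          t = (s, a, s'))}

end FinAut

/-! ### ε-automata -/

/-- The language of an ε-automaton (transitions labelled by `Option α`, where
`none` stands for ε): labels of accepting paths, erasing ε. -/
def epsLang {α : Type} (A : FinAut (Option α)) : Set (List α) :=
  {w | ∃ π ∈ A.Run, w = π.filterMap FinAut.lbl}

/-! ### Constrained automata -/

/-- The language of the constrained automaton `(A, C)`. -/
def CALang {α : Type} (A : FinAut α) (C : Set (A.Trans → ℕ)) : Set (List α) :=
  {w | ∃ π ∈ A.Run, FinAut.pathCount π ∈ C ∧ w = π.map FinAut.lbl}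

/-- The language of the ε-constrained automaton `(A, C)`. -/
def EpsCALang {α : Type} (A : FinAut (Option α)) (C : Set (A.Trans → ℕ)) :
    Set (List α) :=
  {w | ∃ π ∈ A.Run, FinAut.pathCount π ∈ C ∧ w = π.filterMap FinAut.lbl}

def RecByCA {α : Type} (L : Set (List α)) : Prop :=
  ∃ (A : FinAut α) (C : Set (A.Trans → ℕ)), IsSemilinearSetN C ∧ CALang A C = L

def RecByDetCA {α : Type} (L : Set (List α)) : Prop :=
  ∃ (A : FinAut α) (C : Set (A.Trans → ℕ)),
    A.Deterministic ∧ IsSemilinearSetN C ∧ CALang A C = L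

def RecByEpsCA {α : Type} (L : Set (List α)) : Prop :=
  ∃ (A : FinAut (Option α)) (C : Set (A.Trans → ℕ)),
    IsSemilinearSetN C ∧ EpsCALang A C = L

/-- `L` is a finite union of languages of flat deterministic constrained
automata. -/
def FlatDetCAUnion {α : Type} (L : Set (List α)) : Prop :=
  ∃ (m : ℕ) (A : Fin m → FinAut α) (C : ∀ b, Set ((A b).Trans → ℕ)),
    (∀ b, (A b).Flat) ∧ (∀ b, (A b).Deterministic) ∧
    (∀ b, IsSemilinearSetN (C b)) ∧ L = ⋃ b, CALang (A b) (C b)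

/-! ### Parikh automata -/

/-- Projection of a word over `Σ × ℕ^d` on `Σ`. -/
def PsiW {α : Type} {d : ℕ} (ω : List (α × (Fin d → ℕ))) : List α :=
  ω.map Prod.fst

/-- Extended Parikh image: the sum of the vector components. -/
def PhiTilde {α : Type} {d : ℕ} (ω : List (α × (Fin d → ℕ))) : Fin d → ℕ :=
  (ω.map Prod.snd).sum

/-- The language of the Parikh automaton `(A, C)`.  (Note that the set `D` of
vectors appearing on transitions of `A` is automatically finite, since the
transition set of `A` is finite.) -/
def PALang {α : Type} {d : ℕ} (A : FinAut (α × (Fin d → ℕ))) (C : Set (Fin d → ℕ)) :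
    Set (List α) :=
  {w | ∃ ω ∈ A.lang, PhiTilde ω ∈ C ∧ w = PsiW ω}

/-- Determinism for Parikh automata: at most one pair `(v, q')` for each state
`q` and letter `a`. -/
def PADet {α : Type} {d : ℕ} (A : FinAut (α × (Fin d → ℕ))) : Prop :=
  ∀ ⦃p : A.σ⦄ ⦃a : α⦄ ⦃v v' : Fin d → ℕ⦄ ⦃q q' : A.σ⦄,
    (p, (a, v), q) ∈ A.δ → (p, (a, v'), q') ∈ A.δ → v = v' ∧ q = q'

def RecByPA {α : Type} (L : Set (List α)) : Prop :=
  ∃ (d : ℕ) (A : FinAut (α × (Fin d → ℕ))) (C : Set (Fin d → ℕ)),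
    IsSemilinearSetN C ∧ PALang A C = L

def RecByDetPA {α : Type} (L : Set (List α)) : Prop :=
  ∃ (d : ℕ) (A : FinAut (α × (Fin d → ℕ))) (C : Set (Fin d → ℕ)),
    PADet A ∧ IsSemilinearSetN C ∧ PALang A C = L

/-! ### Affine Parikh automata -/

/-- Apply the affine functions `x ↦ M t * x + v t` of the transitions of a path,
in order (first transition first). -/
def pathApply {α : Type} {d : ℕ} (A : FinAut α) (M : A.Trans → Matrix (Fin d) (Fin d) ℕ)
    (v : A.Trans → Fin d → ℕ) : List A.Trans → (Fin d → ℕ) → (Fin d → ℕ)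
  | [], x => x
  | t :: π, x => pathApply A M v π ((M t).mulVec x + v t)

/-- The language of the affine Parikh automaton `(A, U, C)`, where the affine
function attached to transition `t` is `x ↦ M t * x + v t`. -/
def APALang {α : Type} {d : ℕ} (A : FinAut α) (M : A.Trans → Matrix (Fin d) (Fin d) ℕ)
    (v : A.Trans → Fin d → ℕ) (C : Set (Fin d → ℕ)) : Set (List α) :=
  {w | ∃ π ∈ A.Run, pathApply A M v π 0 ∈ C ∧ w = π.map FinAut.lbl}

/-- The monoid of the APA: the multiplicative matrix monoid generated by the
matrices of the transitions. -/
def APAMonoid {α : Type} {d : ℕ} (A : FinAut α) (M : A.Trans → Matrix (Fin d) (Fin d) ℕ) :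
    Set (Matrix (Fin d) (Fin d) ℕ) :=
  (Submonoid.closure (Set.range M) : Submonoid (Matrix (Fin d) (Fin d) ℕ))

/-! ### Semilinear regular expressions -/

/-- The language `y₀ x₁* y₁ ⋯ xₙ* yₙ` of a branch of an SLRE. -/
def branchLang {β : Type} {n : ℕ} (y : Fin (n + 1) → List β) (x : Fin n → List β) :
    Set (List β) :=
  {w | ∃ k : Fin n → ℕ,
    w = y 0 ++ (List.ofFn fun i : Fin n => wpow (x i) (k i) ++ y i.succ).flatten}

end

/-! The Parikh automaton reads a word of `w₁* ⋯ wₙ*` copy by copy, the copies of `wᵢ` in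
nondecreasing order of `i`. The first letter of every copy of `wᵢ` is paired with the unit vector
`eᵢ`, so the vectors along a run add up to the exponent vector `k`. With the iteration set itself
as the constraint, the automaton therefore accepts exactly the words `w₁^{k₁} ⋯ wₙ^{kₙ}` with `k`
in the iteration set, that is `L`, because `w` is a socle of `L`. -/

namespace List

variable {n : ℕ}

def sortedOfCount (k : Fin n → ℕ) : List (Fin n) :=
  (finRange n).flatMap fun i => replicate (k i) i

theorem count_sortedOfCount (k : Fin n → ℕ) (i : Fin n) : (sortedOfCount k).count i = k i := by
  simp [sortedOfCount, count_flatMap, Function.comp_def, count_replicate, ← ofFn_eq_map, sum_ofFn]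

theorem pairwise_sortedOfCount (k : Fin n → ℕ) : (sortedOfCount k).Pairwise (· ≤ ·) := by
  simpa [sortedOfCount, pairwise_flatMap] using (pairwise_le_finRange n).imp fun h _ _ => h

theorem eq_sortedOfCount_of_pairwise {s : List (Fin n)} (hs : s.Pairwise (· ≤ ·)) :
    s = sortedOfCount fun i => s.count i :=
  Perm.eq_of_pairwise' hs (pairwise_sortedOfCount _) (perm_iff_count.2 fun i => by
    rw [count_sortedOfCount])

end List

theorem wpow_eq_flatten_replicate {β : Type} (u : List β) (c : ℕ) :
    wpow u c = (List.replicate c u).flatten := by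
  induction c with
  | zero => rfl
  | succ c ih => rw [wpow, ih, List.replicate_succ, List.flatten_cons]

theorem socProd_eq_flatten_map_sortedOfCount {β : Type} {n : ℕ} (w : Fin n → List β)
    (k : Fin n → ℕ) : socProd w k = ((List.sortedOfCount k).map w).flatten := by
  simp [socProd, List.sortedOfCount, wpow_eq_flatten_replicate, List.ofFn_eq_map,
    List.flatMap_def, List.flatten_flatten, Function.comp_def]

theorem socProd_count_of_pairwise {β : Type} {n : ℕ} (w : Fin n → List β) {s : List (Fin n)}
    (hs : s.Pairwise (· ≤ ·)) : socProd w (fun i => s.count i) = (s.map w).flatten := by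
  rw [socProd_eq_flatten_map_sortedOfCount, ← List.eq_sortedOfCount_of_pairwise hs]

theorem phiTilde_append {α : Type} {d : ℕ} (x y : List (α × (Fin d → ℕ))) :
    PhiTilde (x ++ y) = PhiTilde x + PhiTilde y := by
  simp [PhiTilde]

namespace FinAut

variable {α : Type} {A : FinAut α} (R : A.σ → Set (List α))

theorem Steps.map_lbl_mem (hnil : ∀ f ∈ A.accept, [] ∈ R f)
    (hcons : ∀ (t : A.Trans) (u : List α), u ∈ R (tgt t) → lbl t :: u ∈ R (src t))
    {q f : A.σ} {π : List A.Trans} (h : A.Steps q π f) (hf : f ∈ A.accept) :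
    π.map lbl ∈ R q := by
  induction h with
  | nil q => exact hnil q hf
  | cons hsrc _ ih => exact hsrc ▸ hcons _ _ (ih hf)

theorem exists_steps_of_mem
    (hdest : ∀ q, ∀ u ∈ R q, (u = [] ∧ q ∈ A.accept) ∨
      ∃ t : A.Trans, src t = q ∧ ∃ u' ∈ R (tgt t), u = lbl t :: u')
    (u : List α) {q : A.σ} (hu : u ∈ R q) :
    ∃ π : List A.Trans, ∃ f ∈ A.accept, A.Steps q π f ∧ π.map lbl = u := by
  induction u generalizing q with
  | nil =>
    rcases hdest q [] hu with ⟨-, hq⟩ | ⟨_, _, _, _, h⟩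
    · exact ⟨[], q, hq, .nil q, rfl⟩
    · cases h
  | cons a u ih =>
    rcases hdest q _ hu with ⟨h, -⟩ | ⟨t, hsrc, u', hu', h⟩
    · cases h
    obtain ⟨rfl, rfl⟩ := List.cons_eq_cons.1 h
    obtain ⟨π, f, hf, hπ, rfl⟩ := ih hu'
    exact ⟨t :: π, f, hf, .cons hsrc hπ, rfl⟩

/-- `R` solves the one-step language equations of `A`; the solution is unique because each
equation consumes a letter. -/
theorem lang_eq_of_residuals (hnil : ∀ f ∈ A.accept, [] ∈ R f)
    (hcons : ∀ (t : A.Trans) (u : List α), u ∈ R (tgt t) → lbl t :: u ∈ R (src t))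
    (hdest : ∀ q, ∀ u ∈ R q, (u = [] ∧ q ∈ A.accept) ∨
      ∃ t : A.Trans, src t = q ∧ ∃ u' ∈ R (tgt t), u = lbl t :: u') :
    A.lang = R A.init := by
  ext u
  constructor
  · rintro ⟨π, ⟨f, hf, hπ⟩, rfl⟩
    exact hπ.map_lbl_mem R hnil hcons hf
  · intro hu
    obtain ⟨π, f, hf, hπ, rfl⟩ := exists_steps_of_mem R hdest u hu
    exact ⟨π, ⟨f, hf, hπ⟩, rfl⟩

end FinAut

namespace Socle

variable {α : Type} {n : ℕ} (w : Fin n → List α)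

def markedLetter (i : Fin n) (j : Fin (w i).length) : α × (Fin n → ℕ) :=
  ((w i)[j], if (j : ℕ) = 0 then Pi.single i 1 else 0)

def markedBlock (i : Fin n) : List (α × (Fin n → ℕ)) :=
  List.ofFn (markedLetter w i)

def markedWord (s : List (Fin n)) : List (α × (Fin n → ℕ)) :=
  (s.map (markedBlock w)).flatten

/-- `some ⟨i, j⟩`: the last letter read is letter `j` of a copy of `w i`. -/
abbrev State : Type :=
  Option ((i : Fin n) × Fin (w i).length)

def remaining : State w → List (α × (Fin n → ℕ))
  | none => []
  | some ⟨i, j⟩ => (markedBlock w i).drop (j + 1)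

def CanRead (q : State w) (i : Fin n) (j : Fin (w i).length) : Prop :=
  (∃ j₀ : Fin (w i).length, (j : ℕ) = j₀ + 1 ∧ q = some ⟨i, j₀⟩) ∨
    ((j : ℕ) = 0 ∧ remaining w q = [] ∧ ∀ p ∈ q, p.1 ≤ i)

def aut : FinAut (α × (Fin n → ℕ)) where
  σ := State w
  init := none
  accept := {q | remaining w q = []}
  δ := {t | ∃ i j, CanRead w t.1 i j ∧ t.2 = (markedLetter w i j, some ⟨i, j⟩)}
  finδ := by
    refine (Set.finite_range fun p : State w × (i : Fin n) × Fin (w i).length =>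
      (p.1, markedLetter w p.2.1 p.2.2, some p.2)).subset ?_
    rintro ⟨q, _⟩ ⟨i, j, -, rfl⟩
    exact ⟨(q, ⟨i, j⟩), rfl⟩

def residual (q : State w) : Set (List (α × (Fin n → ℕ))) :=
  {u | ∃ s : List (Fin n), (∀ p ∈ q, ∀ i ∈ s, p.1 ≤ i) ∧ s.Pairwise (· ≤ ·) ∧
    u = remaining w q ++ markedWord w s}

theorem drop_markedBlock (i : Fin n) (j : Fin (w i).length) :
    (markedBlock w i).drop j = markedLetter w i j :: remaining w (some ⟨i, j⟩) := by
  rw [remaining, List.drop_eq_getElem_cons (by simp [markedBlock])]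
  simp [markedBlock]

theorem remaining_eq_cons {i : Fin n} {j₀ j : Fin (w i).length} (hj : (j : ℕ) = j₀ + 1) :
    remaining w (some ⟨i, j₀⟩) = markedLetter w i j :: remaining w (some ⟨i, j⟩) := by
  rw [← drop_markedBlock, hj, remaining]

theorem markedBlock_eq_cons {i : Fin n} {j : Fin (w i).length} (hj : (j : ℕ) = 0) :
    markedBlock w i = markedLetter w i j :: remaining w (some ⟨i, j⟩) := by
  rw [← drop_markedBlock, hj, List.drop_zero]

theorem lt_length_of_remaining_ne_nil {i : Fin n} {j : Fin (w i).length}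
    (h : remaining w (some ⟨i, j⟩) ≠ []) : (j : ℕ) + 1 < (w i).length := by
  simpa [remaining, markedBlock] using h

theorem markedWord_cons (i : Fin n) (s : List (Fin n)) :
    markedWord w (i :: s) = markedBlock w i ++ markedWord w s := rfl

theorem residual_of_accept {q : State w} (hq : q ∈ (aut w).accept) : [] ∈ residual w q :=
  ⟨[], by simp, .nil, by simpa [markedWord] using hq.symm⟩

theorem cons_mem_residual (t : (aut w).Trans) (u : List (α × (Fin n → ℕ)))
    (hu : u ∈ residual w (FinAut.tgt t)) :
    FinAut.lbl t :: u ∈ residual w (FinAut.src t) := by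
  obtain ⟨⟨q, a, q'⟩, i, j, hread, hlbl⟩ := t
  obtain ⟨rfl, rfl⟩ := Prod.mk.inj hlbl
  obtain ⟨s, hbound, hs, rfl⟩ := hu
  change markedLetter w i j :: (remaining w (some ⟨i, j⟩) ++ markedWord w s) ∈ residual w q
  replace hbound : ∀ k ∈ s, i ≤ k := by simpa [FinAut.tgt] using hbound
  dsimp only at hread
  rcases hread with ⟨j₀, hj, rfl⟩ | ⟨hj, hq, hbelow⟩
  · refine ⟨s, by simpa using hbound, hs, ?_⟩
    rw [remaining_eq_cons w hj, List.cons_append]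
  · refine ⟨i :: s, ?_, List.pairwise_cons.2 ⟨hbound, hs⟩, ?_⟩
    · intro p hp k hk
      rcases List.mem_cons.1 hk with rfl | hk
      · exact hbelow p hp
      · exact (hbelow p hp).trans (hbound k hk)
    · rw [hq, markedWord_cons, markedBlock_eq_cons w hj, List.cons_append, List.nil_append]

theorem exists_trans_of_canRead {q : State w} {i : Fin n} {j : Fin (w i).length}
    (hread : CanRead w q i j) {u u' : List (α × (Fin n → ℕ))}
    (hu' : u' ∈ residual w (some ⟨i, j⟩)) (hu : u = markedLetter w i j :: u') :
    ∃ t : (aut w).Trans, FinAut.src t = q ∧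
      ∃ u' ∈ residual w (FinAut.tgt t), u = FinAut.lbl t :: u' :=
  ⟨⟨(q, markedLetter w i j, some ⟨i, j⟩), i, j, hread, rfl⟩, rfl, u', hu', hu⟩

theorem residual_unfold (hne : ∀ i, w i ≠ []) (q : State w) (u : List (α × (Fin n → ℕ)))
    (hu : u ∈ residual w q) :
    (u = [] ∧ q ∈ (aut w).accept) ∨ ∃ t : (aut w).Trans, FinAut.src t = q ∧
      ∃ u' ∈ residual w (FinAut.tgt t), u = FinAut.lbl t :: u' := by
  obtain ⟨s, hbound, hs, rfl⟩ := hu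
  by_cases hq : remaining w q = []
  · rcases s with _ | ⟨i, s⟩
    · exact Or.inl ⟨by simp [hq, markedWord], hq⟩
    obtain ⟨hi, hs⟩ := List.pairwise_cons.1 hs
    let j : Fin (w i).length := ⟨0, List.length_pos_iff.2 (hne i)⟩
    refine Or.inr (exists_trans_of_canRead w (j := j)
      (Or.inr ⟨rfl, hq, fun p hp => hbound p hp i List.mem_cons_self⟩)
      ⟨s, by simpa using hi, hs, rfl⟩ ?_)
    rw [hq, markedWord_cons, markedBlock_eq_cons w (j := j) rfl]
    rfl
  · rcases q with _ | ⟨i, j₀⟩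
    · exact absurd rfl hq
    let j : Fin (w i).length := ⟨j₀ + 1, lt_length_of_remaining_ne_nil w hq⟩
    refine Or.inr (exists_trans_of_canRead w (j := j) (Or.inl ⟨j₀, rfl, rfl⟩)
      ⟨s, by simpa using hbound, hs, rfl⟩ ?_)
    rw [remaining_eq_cons w (j := j) rfl]
    rfl

theorem lang_aut (hne : ∀ i, w i ≠ []) :
    (aut w).lang = {u | ∃ s : List (Fin n), s.Pairwise (· ≤ ·) ∧ u = markedWord w s} := by
  rw [FinAut.lang_eq_of_residuals (residual w) (fun _ => residual_of_accept w)
    (cons_mem_residual w) (residual_unfold w hne)]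
  simp [residual, aut, remaining]

theorem psiW_markedWord (s : List (Fin n)) : PsiW (markedWord w s) = (s.map w).flatten := by
  simp [PsiW, markedWord, markedBlock, markedLetter, Function.comp_def, List.map_ofFn]

theorem phiTilde_markedBlock (hne : ∀ i, w i ≠ []) (i : Fin n) :
    PhiTilde (markedBlock w i) = Pi.single i 1 := by
  have h0 : 0 < (w i).length := List.length_pos_iff.2 (hne i)
  simp only [PhiTilde, markedBlock, List.map_ofFn, List.sum_ofFn, Function.comp_def, markedLetter]
  rw [Finset.sum_eq_single ⟨0, h0⟩ (fun j _ hj => if_neg fun h => hj (Fin.ext h)) (by simp)]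
  rfl

theorem phiTilde_markedWord (hne : ∀ i, w i ≠ []) (s : List (Fin n)) :
    PhiTilde (markedWord w s) = fun i => s.count i := by
  induction s with
  | nil => rfl
  | cons i s ih =>
    rw [markedWord_cons, phiTilde_append, phiTilde_markedBlock w hne, ih]
    funext k
    simp only [Pi.add_apply, Pi.single_apply, List.count_cons, beq_iff_eq]
    split_ifs <;> omega

end Socle

theorem bsl_recByPA_general {α : Type} (L : Set (List α))
    {n : ℕ} (w : Fin n → List α) (hw : IsSocle L w)
    (hsl : IsSemilinearSetN (IterSet L w)) :
    RecByPA L := by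
  obtain ⟨hne, hsoc⟩ := hw
  refine ⟨n, Socle.aut w, IterSet L w, hsl, Set.ext fun x => ?_⟩
  simp only [PALang, Socle.lang_aut w hne, Set.mem_ofPred_eq]
  refine ⟨?_, fun hx => ?_⟩
  · rintro ⟨_, ⟨s, hs, rfl⟩, hC, rfl⟩
    rw [Socle.phiTilde_markedWord w hne] at hC
    rwa [Socle.psiW_markedWord, ← socProd_count_of_pairwise w hs]
  · obtain ⟨k, rfl⟩ := hsoc x hx
    refine ⟨_, ⟨List.sortedOfCount k, List.pairwise_sortedOfCount k, rfl⟩, ?_, ?_⟩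
    · rwa [Socle.phiTilde_markedWord w hne, funext (List.count_sortedOfCount k)]
    · rw [Socle.psiW_markedWord, socProd_eq_flatten_map_sortedOfCount]

/-- Every bounded semilinear language is recognized by a
Parikh automaton. -/
theorem bsl_recByPA {α : Type} [Fintype α] (L : Set (List α))
    {n : ℕ} (hn : 0 < n) (w : Fin n → List α) (hw : IsSocle L w)
    (hsl : IsSemilinearSetN (IterSet L w)) :
    RecByPA L :=
  bsl_recByPA_general L w hw hsl
end

section
/- For every bounded semilinear language L ∈ BSL there exists an ε-constrained automaton (A, C) with L(A, C) = L that has the constraint-determinism property: for any two accepting paths π₁, π₂ of A with the same label, Φ(π₁) ∈ C if and only if Φ(π₂) ∈ C. -/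
open scoped Classical

/-!
Let `w₀, …, wₘ` be a socle of `L` with semilinear iteration set `I`. The ε-automaton has one
cycle per `wᵢ`, spelling `wᵢ`, and an ε-edge from the base of cycle `i` to the base of cycle
`i + 1`. Every accepting path spells `w₀^{k₀} ⋯ wₘ^{kₘ}`, where `kᵢ` counts the traversals of the
edge closing cycle `i`, and every such word is spelled by some accepting path. Constraining the
vector `k`, a coordinate projection of the Parikh image, to lie in `I` gives a semilinear
constraint `C`, and a path then satisfies `C` exactly when its label lies in `L`; in particular,
whether it satisfies `C` depends only on its label.
-/

open FinAut Pointwise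

theorem isLinearSetN_iff {ι : Type} {C : Set (ι → ℕ)} : IsLinearSetN C ↔ IsLinearSet C := by
  have hset (c : ι → ℕ) (P : Set (ι → ℕ)) : {x | ∃ p ∈ AddSubmonoid.closure P, x = c + p} =
      c +ᵥ (AddSubmonoid.closure P : Set (ι → ℕ)) := by
    ext x
    simp [Set.mem_vadd_set, eq_comm]
  simp only [IsLinearSetN, IsLinearSet, hset]

theorem isSemilinearSetN_iff {ι : Type} {C : Set (ι → ℕ)} :
    IsSemilinearSetN C ↔ IsSemilinearSet C := by
  simp only [IsSemilinearSetN, IsSemilinearSet, isLinearSetN_iff]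

theorem IsSemilinearSetN.preimage_comp {ι κ : Type} [Finite ι] {S : Set (κ → ℕ)}
    (hS : IsSemilinearSetN S) (e : κ → ι) : IsSemilinearSetN ((· ∘ e) ⁻¹' S) :=
  isSemilinearSetN_iff.2 ((isSemilinearSetN_iff.1 hS).preimage (LinearMap.funLeft ℕ ℕ e))

theorem wpow_add {β : Type} (x : List β) (r s : ℕ) : wpow x (r + s) = wpow x r ++ wpow x s := by
  induction r with
  | zero => simp [wpow]
  | succ r ih => rw [Nat.add_right_comm, wpow, wpow, ih, List.append_assoc]

theorem socProd_zero {β : Type} {n : ℕ} (w : Fin n → List β) : socProd w 0 = [] := by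
  simp [socProd, wpow]

theorem socProd_succ {β : Type} {n : ℕ} (w : Fin (n + 1) → List β) (k : Fin (n + 1) → ℕ) :
    socProd w k = wpow (w 0) (k 0) ++ socProd (fun i => w i.succ) (fun i => k i.succ) := by
  simp [socProd, List.ofFn_succ]

theorem socProd_single_add {β : Type} {n : ℕ} (w : Fin n → List β) {k : Fin n → ℕ} {i : Fin n}
    (hk : ∀ j < i, k j = 0) (r : ℕ) :
    socProd w (Pi.single i r + k) = wpow (w i) r ++ socProd w k := by
  induction n with
  | zero => exact i.elim0
  | succ n ih =>
    rw [socProd_succ, socProd_succ w k]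
    cases i using Fin.cases with
    | zero => simp [wpow_add]
    | succ i =>
      have hk0 : k 0 = 0 := hk 0 (Fin.succ_pos i)
      have hsucc : (fun j : Fin n => (Pi.single i.succ r + k : Fin (n + 1) → ℕ) j.succ) =
          Pi.single i r + fun j => k j.succ := by
        funext j
        simp [Pi.single_apply]
      rw [hsucc, ih _ (fun j hj => hk j.succ (Fin.succ_lt_succ_iff.2 hj))]
      simp [hk0, wpow]

theorem socProd_eq_wpow_append_update {β : Type} {n : ℕ} (w : Fin n → List β) {k : Fin n → ℕ}
    {i : Fin n} (hk : ∀ j < i, k j = 0) :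
    socProd w k = wpow (w i) (k i) ++ socProd w (Function.update k i 0) := by
  have hrest : ∀ j < i, Function.update k i 0 j = 0 := fun j hj => by simp [hk j hj, hj.ne]
  rw [← socProd_single_add w hrest]
  congr 1
  funext j
  by_cases hj : j = i <;> simp [hj]

namespace FinAut

variable {α : Type}

theorem Steps.append {A : FinAut α} {q r s : A.σ} {π ρ : List A.Trans} (h₁ : A.Steps q π r)
    (h₂ : A.Steps r ρ s) : A.Steps q (π ++ ρ) s := by
  induction h₁ with
  | nil => exact h₂
  | cons hsrc _ ih => exact .cons hsrc (ih h₂)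

theorem pathCount_cons {A : FinAut α} (t : A.Trans) (π : List A.Trans) :
    pathCount (t :: π) = Pi.single t 1 + pathCount π := by
  funext s
  by_cases h : t = s
  · subst h; simp [pathCount, countOcc]; omega
  · simp [pathCount, countOcc, h, Ne.symm h]

def Reads (A : FinAut (Option α)) (q : A.σ) (x : List α) (r : A.σ) : Prop :=
  ∃ π, A.Steps q π r ∧ π.filterMap lbl = x

variable {A : FinAut (Option α)}

theorem Reads.refl (q : A.σ) : A.Reads q [] q := ⟨[], .nil q, rfl⟩

theorem Reads.trans {q r s : A.σ} {x y : List α} (h₁ : A.Reads q x r) (h₂ : A.Reads r y s) :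
    A.Reads q (x ++ y) s := by
  obtain ⟨π, hπ, rfl⟩ := h₁
  obtain ⟨ρ, hρ, rfl⟩ := h₂
  exact ⟨π ++ ρ, hπ.append hρ, List.filterMap_append⟩

theorem Reads.edge {q r : A.σ} {a : Option α} (h : (q, a, r) ∈ A.δ) : A.Reads q a.toList r :=
  ⟨[⟨(q, a, r), h⟩], .cons rfl (.nil r), by cases a <;> rfl⟩

theorem mem_epsLang_of_reads {f : A.σ} {x : List α} (hf : f ∈ A.accept) (h : A.Reads A.init x f) :
    x ∈ epsLang A := by
  obtain ⟨π, hπ, rfl⟩ := h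
  exact ⟨π, ⟨f, hf, hπ⟩, rfl⟩

def ConstraintDeterministic (A : FinAut (Option α)) (C : Set (A.Trans → ℕ)) : Prop :=
  ∀ π₁ π₂, π₁ ∈ A.Run → π₂ ∈ A.Run → π₁.filterMap lbl = π₂.filterMap lbl →
    (pathCount π₁ ∈ C ↔ pathCount π₂ ∈ C)

variable {C : Set (A.Trans → ℕ)} {L : Set (List α)}

theorem epsCALang_eq_of_mem_iff (hC : ∀ π ∈ A.Run, pathCount π ∈ C ↔ π.filterMap lbl ∈ L)
    (hL : L ⊆ epsLang A) : EpsCALang A C = L := by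
  ext x
  constructor
  · rintro ⟨π, hπ, hπC, rfl⟩
    exact (hC π hπ).1 hπC
  · intro hx
    obtain ⟨π, hπ, rfl⟩ := hL hx
    exact ⟨π, hπ, (hC π hπ).2 hx, rfl⟩

theorem constraintDeterministic_of_mem_iff
    (hC : ∀ π ∈ A.Run, pathCount π ∈ C ↔ π.filterMap lbl ∈ L) : A.ConstraintDeterministic C := by
  intro π₁ π₂ h₁ h₂ hlabel
  rw [hC π₁ h₁, hC π₂ h₂, hlabel]

end FinAut

namespace SocleAut

variable {α : Type} {m : ℕ} (w : Fin (m + 1) → List α) (hw : ∀ i, w i ≠ [])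

abbrev State : Type := (i : Fin (m + 1)) × Fin (w i).length

def nextPos {l : ℕ} (j : Fin l) : Fin l := ⟨(j + 1) % l, Nat.mod_lt _ (Nat.zero_lt_of_lt j.2)⟩

theorem nextPos_val {l : ℕ} (j : Fin l) : (nextPos j : ℕ) = if j.1 + 1 = l then 0 else j.1 + 1 := by
  have := j.2
  split_ifs with h
  · simp [nextPos, h]
  · simp [nextPos, Nat.mod_eq_of_lt (show j.1 + 1 < l by omega)]

def startPos (i : Fin (m + 1)) : Fin (w i).length := ⟨0, List.length_pos_iff.2 (hw i)⟩

def lastPos (i : Fin (m + 1)) : Fin (w i).length :=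
  ⟨(w i).length - 1, Nat.sub_lt (List.length_pos_iff.2 (hw i)) Nat.one_pos⟩

def readEdge (s : State w) : State w × Option α × State w :=
  (s, some (w s.1)[s.2], ⟨s.1, nextPos s.2⟩)

def skipEdge (i : Fin m) : State w × Option α × State w :=
  (⟨i.castSucc, startPos w hw _⟩, none, ⟨i.succ, startPos w hw _⟩)

abbrev aut : FinAut (Option α) where
  σ := State w
  init := ⟨0, startPos w hw 0⟩
  accept := {⟨Fin.last m, startPos w hw _⟩}
  δ := Set.range (readEdge w) ∪ Set.range (skipEdge w hw)
  finδ := (Set.finite_range _).union (Set.finite_range _)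

def readTrans (s : State w) : (aut w hw).Trans := ⟨readEdge w s, Or.inl ⟨s, rfl⟩⟩

def skipTrans (i : Fin m) : (aut w hw).Trans := ⟨skipEdge w hw i, Or.inr ⟨i, rfl⟩⟩

def loopEdge (i : Fin (m + 1)) : (aut w hw).Trans := readTrans w hw ⟨i, lastPos w hw i⟩

noncomputable def loopCount (π : List (aut w hw).Trans) : Fin (m + 1) → ℕ :=
  pathCount π ∘ loopEdge w hw

theorem loopEdge_eq_readTrans_iff {i : Fin (m + 1)} {s : State w} :
    loopEdge w hw i = readTrans w hw s ↔ s.1 = i ∧ s.2.1 + 1 = (w s.1).length := by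
  obtain ⟨i₀, j⟩ := s
  dsimp only
  refine ⟨fun he => ?_, fun ⟨hi, hj⟩ => ?_⟩
  · cases congrArg (fun t : (aut w hw).Trans => t.1.1) he
    simp [lastPos, Nat.sub_add_cancel (List.length_pos_iff.2 (hw i))]
  · subst hi
    exact congrArg (readTrans w hw) (Sigma.ext rfl (heq_of_eq (Fin.ext (by simp [lastPos]; omega))))

theorem loopCount_nil : loopCount w hw [] = 0 := rfl

theorem loopCount_readTrans_cons (s : State w) (π : List (aut w hw).Trans) :
    loopCount w hw (readTrans w hw s :: π) =
      (if s.2.1 + 1 = (w s.1).length then Pi.single s.1 1 else 0) + loopCount w hw π := by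
  rw [loopCount, loopCount, pathCount_cons]
  funext i
  by_cases hlast : s.2.1 + 1 = (w s.1).length
  · simp [Pi.single_apply, loopEdge_eq_readTrans_iff, hlast, eq_comm]
  · simp [loopEdge_eq_readTrans_iff, hlast]

theorem loopCount_skipTrans_cons (i : Fin m) (π : List (aut w hw).Trans) :
    loopCount w hw (skipTrans w hw i :: π) = loopCount w hw π := by
  have hne (i' : Fin (m + 1)) : loopEdge w hw i' ≠ skipTrans w hw i := fun he =>
    Option.some_ne_none _ (congrArg (fun t : (aut w hw).Trans => t.1.2.1) he)
  rw [loopCount, loopCount, pathCount_cons]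
  funext i'
  simp [hne]

/-- The prefix `take q.2 (w q.1)` of the current cycle has been read before reaching `q`. -/
theorem take_append_label_eq_socProd {q : (aut w hw).σ} {π : List (aut w hw).Trans}
    (hπ : (aut w hw).Steps q π ⟨Fin.last m, startPos w hw _⟩) :
    (w q.1).take q.2 ++ π.filterMap lbl = socProd w (loopCount w hw π) ∧
      ∀ i < q.1, loopCount w hw π i = 0 := by
  generalize hf : (⟨Fin.last m, startPos w hw _⟩ : (aut w hw).σ) = f at hπ
  induction hπ with
  | nil q =>
    subst hf
    simp [startPos, loopCount_nil, socProd_zero]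
  | @cons q _ t π hsrc _ ih =>
    obtain ⟨_, ⟨⟨i, j⟩, rfl⟩ | ⟨i, rfl⟩⟩ := t <;> obtain rfl := hsrc
    · obtain ⟨hlabel, hzero⟩ : (w i).take (nextPos j) ++ π.filterMap lbl =
          socProd w (loopCount w hw π) ∧ ∀ i' < i, loopCount w hw π i' = 0 := ih hf
      change (w i).take j ++ (w i)[j] :: π.filterMap lbl =
          socProd w (loopCount w hw (readTrans w hw ⟨i, j⟩ :: π)) ∧
        ∀ i' < i, loopCount w hw (readTrans w hw ⟨i, j⟩ :: π) i' = 0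
      rw [loopCount_readTrans_cons]
      rw [nextPos_val] at hlabel
      dsimp only
      split_ifs at hlabel ⊢ with hlast
      · refine ⟨?_, fun i' hi' => by simp [hzero i' hi', hi'.ne]⟩
        rw [socProd_single_add w hzero, ← hlabel, List.take_zero, List.nil_append,
          ← List.singleton_append, ← List.append_assoc, Fin.getElem_fin, List.take_concat_get',
          hlast, List.take_length]
        simp [wpow]
      · refine ⟨?_, fun i' hi' => by simp [hzero i' hi']⟩
        rw [zero_add, ← hlabel, ← List.take_concat_get' _ _ (by omega), List.append_assoc]
        rfl
    · obtain ⟨hlabel, hzero⟩ : (w i.succ).take 0 ++ π.filterMap lbl =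
          socProd w (loopCount w hw π) ∧ ∀ i' < i.succ, loopCount w hw π i' = 0 := ih hf
      change (w i.castSucc).take 0 ++ π.filterMap lbl =
          socProd w (loopCount w hw (skipTrans w hw i :: π)) ∧ ∀ i' < i.castSucc,
        loopCount w hw (skipTrans w hw i :: π) i' = 0
      rw [loopCount_skipTrans_cons]
      exact ⟨by simpa using hlabel, fun i' hi' => hzero i' (hi'.trans Fin.castSucc_lt_succ)⟩

theorem label_eq_socProd_of_mem_run {π : List (aut w hw).Trans} (hπ : π ∈ (aut w hw).Run) :
    π.filterMap lbl = socProd w (loopCount w hw π) := by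
  obtain ⟨f, hf, hsteps⟩ := hπ
  obtain rfl : f = ⟨Fin.last m, startPos w hw _⟩ := hf
  simpa [startPos] using (take_append_label_eq_socProd w hw hsteps).1

theorem reads_readEdge (s : State w) :
    (aut w hw).Reads s [(w s.1)[s.2]] ⟨s.1, nextPos s.2⟩ :=
  Reads.edge (A := aut w hw) (Or.inl ⟨s, rfl⟩)

theorem reads_skipEdge (i : Fin m) :
    (aut w hw).Reads ⟨i.castSucc, startPos w hw _⟩ [] ⟨i.succ, startPos w hw _⟩ :=
  Reads.edge (A := aut w hw) (Or.inr ⟨i, rfl⟩)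

theorem reads_take (i : Fin (m + 1)) :
    ∀ j (hj : j < (w i).length),
      (aut w hw).Reads ⟨i, startPos w hw i⟩ ((w i).take j) ⟨i, ⟨j, hj⟩⟩
  | 0, _ => Reads.refl _
  | j + 1, hj => by
    have hnext : nextPos (⟨j, by omega⟩ : Fin (w i).length) = ⟨j + 1, hj⟩ :=
      Fin.ext (by simp [nextPos_val]; omega)
    have := (reads_take i j (by omega)).trans (reads_readEdge w hw ⟨i, ⟨j, by omega⟩⟩)
    rwa [Fin.getElem_fin, List.take_concat_get', hnext] at this

theorem reads_cycle (i : Fin (m + 1)) :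
    (aut w hw).Reads ⟨i, startPos w hw i⟩ (w i) ⟨i, startPos w hw i⟩ := by
  have hlen := List.length_pos_iff.2 (hw i)
  have hnext : nextPos (lastPos w hw i) = startPos w hw i :=
    Fin.ext (by simp [nextPos_val, lastPos, startPos]; omega)
  have := (reads_take w hw i _ (lastPos w hw i).2).trans (reads_readEdge w hw ⟨i, lastPos w hw i⟩)
  rwa [Fin.getElem_fin, List.take_concat_get', hnext, lastPos, Nat.sub_add_cancel hlen,
    List.take_length] at this

theorem reads_wpow (i : Fin (m + 1)) (r : ℕ) :
    (aut w hw).Reads ⟨i, startPos w hw i⟩ (wpow (w i) r) ⟨i, startPos w hw i⟩ := by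
  induction r with
  | zero => exact Reads.refl _
  | succ r ih => exact (reads_cycle w hw i).trans ih

theorem reads_socProd (i : Fin (m + 1)) :
    ∀ k : Fin (m + 1) → ℕ, (∀ j < i, k j = 0) →
      (aut w hw).Reads ⟨i, startPos w hw i⟩ (socProd w k) ⟨Fin.last m, startPos w hw _⟩ := by
  induction i using Fin.reverseInduction with
  | last =>
    intro k hk
    have hrest : Function.update k (Fin.last m) 0 = 0 := by
      funext j
      rcases (Fin.le_last j).lt_or_eq with hj | rfl
      · simp [hk j hj, hj.ne]
      · simp
    rw [socProd_eq_wpow_append_update w hk, hrest, socProd_zero, List.append_nil]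
    exact reads_wpow w hw _ _
  | cast i ih =>
    intro k hk
    have hrest : ∀ j < i.succ, Function.update k i.castSucc 0 j = 0 := by
      intro j hj
      rcases (Fin.le_castSucc_iff.2 hj).lt_or_eq with hj | rfl
      · simp [hk j hj, hj.ne]
      · simp
    rw [socProd_eq_wpow_append_update w hk]
    simpa using (reads_wpow w hw _ _).trans ((reads_skipEdge w hw i).trans (ih _ hrest))

theorem socProd_mem_epsLang (k : Fin (m + 1) → ℕ) : socProd w k ∈ epsLang (aut w hw) :=
  mem_epsLang_of_reads rfl (reads_socProd w hw 0 k fun j hj => absurd hj (Fin.not_lt_zero j))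

end SocleAut

theorem bsl_has_constraintDet_epsCA_general {α : Type} (L : Set (List α))
    (h : InBSL L) :
    ∃ (A : FinAut (Option α)) (C : Set (A.Trans → ℕ)),
      IsSemilinearSetN C ∧ EpsCALang A C = L ∧
      ∀ π₁ π₂, π₁ ∈ A.Run → π₂ ∈ A.Run →
        π₁.filterMap FinAut.lbl = π₂.filterMap FinAut.lbl →
        (FinAut.pathCount π₁ ∈ C ↔ FinAut.pathCount π₂ ∈ C) := by
  obtain ⟨n, w, hn, ⟨hw, hL⟩, hsl⟩ := h
  obtain ⟨m, rfl⟩ := Nat.exists_eq_add_one_of_ne_zero hn.ne'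
  let A := SocleAut.aut w hw
  have : Finite A.Trans := A.finδ.to_subtype
  have hC : ∀ π ∈ A.Run,
      pathCount π ∈ (· ∘ SocleAut.loopEdge w hw) ⁻¹' IterSet L w ↔ π.filterMap lbl ∈ L := by
    intro π hπ
    rw [SocleAut.label_eq_socProd_of_mem_run w hw hπ]
    rfl
  have hLA : L ⊆ epsLang A := fun x hx => by
    obtain ⟨k, rfl⟩ := hL x hx
    exact SocleAut.socProd_mem_epsLang w hw k
  exact ⟨A, _, hsl.preimage_comp _, epsCALang_eq_of_mem_iff hC hLA,
    constraintDeterministic_of_mem_iff hC⟩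

/-- Every bounded semilinear language is the language of an
ε-constrained automaton having the constraint-determinism property. -/
theorem bsl_has_constraintDet_epsCA {α : Type} [Fintype α] (L : Set (List α))
    (h : InBSL L) :
    ∃ (A : FinAut (Option α)) (C : Set (A.Trans → ℕ)),
      IsSemilinearSetN C ∧ EpsCALang A C = L ∧
      ∀ π₁ π₂, π₁ ∈ A.Run → π₂ ∈ A.Run →
        π₁.filterMap FinAut.lbl = π₂.filterMap FinAut.lbl →
        (FinAut.pathCount π₁ ∈ C ↔ FinAut.pathCount π₂ ∈ C) :=
  bsl_has_constraintDet_epsCA_general L h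
end
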